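/- For 2 < p < 6 and ϑ(p,2) < θ < 1, the function N(θ,p) as defined (with N(1,p) = 1) satisfies N(θ,p) > 1. -/

import Mathlib

noncomputable def Nfun (θ p : ℝ) : ℝ :=
  (2 / (2 - p * (1 - θ))) ^ ((p - 2) / (2 * p * θ)) *
  ((p + 2) / 4) ^ ((6 - p) / (2 * p * θ)) *
  (2 * (2 - p * (1 - θ)) / ((2 * θ - 1) * p + 2)) ^ ((2 * p * θ - 3 * (p - 2)) / (2 * p * θ)) *
  (Real.Gamma (2 / (p - 2)) * Real.Gamma ((2 - p * (1 - θ)) / (p - 2) + 1 / 2) /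
    (Real.Gamma (2 / (p - 2) + 1 / 2) * Real.Gamma ((2 - p * (1 - θ)) / (p - 2)))) ^ ((p - 2) / (p * θ))

/-!
Put `a = 2/(p-2)`, `s = (2-p(1-θ))/(p-2)` and `c = (p-2)/(2pθ)`; for `(p-2)/p < θ < 1` one has
`0 < s < a` and `c > 0`, and `log N(θ,p) = c (Φ s - Φ a)` with
`Φ u = -log u + (2u-1) log (2u/(2u+1)) + 2 log (Γ(u+1/2)/Γ(u))`.
So it suffices that `Φ` is strictly decreasing on `(0, ∞)`.

Replace `log (Γ(u+1/2)/Γ(u))` by the logarithm of Gauss's product, a finite sum of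
`log ((u+k)/(u+k+1/2))`. The derivative of the resulting approximation of `Φ`, plus that of
`log ((4u+1)/(4u+3))`, is `≤ 0`:
the `k = 0` term cancels the rational part of the derivative of the first two terms of `Φ`,
`log (1 + 1/x) ≥ 2/(2x+1)` controls the logarithmic part, and the remaining terms telescope.
In the limit, `Φ u + log ((4u+1)/(4u+3))` is antitone, and the correction term is strictly
increasing.
-/

open Real Filter Topology Finset

namespace Nfun

theorem two_div_le_log_one_add_inv {x : ℝ} (hx : 0 < x) :
    2 / (2 * x + 1) ≤ log (1 + x⁻¹) := by
  have h : _ ≤ log (1 + x⁻¹) :=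
    le_hasSum (hasSum_log_one_add_inv hx) 0 fun k _ => by positivity
  norm_num at h
  exact h

theorem log_two_mul_sub_log_le {u : ℝ} (hu : 0 < u) :
    log (2 * u) - log (2 * u + 1) ≤ -(2 / (4 * u + 1)) := by
  have h := two_div_le_log_one_add_inv (by positivity : 0 < 2 * u)
  rw [show 1 + (2 * u)⁻¹ = (2 * u + 1) / (2 * u) by field_simp,
    log_div (by positivity) (by positivity), show 2 * (2 * u) + 1 = 4 * u + 1 by ring] at h
  linarith

theorem sum_range_inv_sub_inv_le {u : ℝ} (hu : -3 / 4 < u) (n : ℕ) :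
    ∑ k ∈ range n, (1 / (u + k + 1) - 1 / (u + k + 3 / 2)) ≤ 2 / (4 * u + 3) := by
  let f : ℕ → ℝ := fun k => (1 / 2) / (u + k + 3 / 4)
  have step : ∀ k ∈ range n, 1 / (u + k + 1) - 1 / (u + k + 3 / 2) ≤ f k - f (k + 1) := by
    intro k _
    have hk : (0 : ℝ) ≤ k := k.cast_nonneg
    simp only [f, Nat.cast_succ]
    rw [div_sub_div _ _ (by linarith) (by linarith), div_sub_div _ _ (by linarith) (by linarith),
      div_le_div_iff₀ (by nlinarith) (by nlinarith)]
    nlinarith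
  calc ∑ k ∈ range n, (1 / (u + k + 1) - 1 / (u + k + 3 / 2))
      ≤ ∑ k ∈ range n, (f k - f (k + 1)) := sum_le_sum step
    _ = f 0 - f n := sum_range_sub' f n
    _ ≤ f 0 :=
      sub_le_self _ (div_nonneg one_half_pos.le (by linarith [n.cast_nonneg (α := ℝ)]))
    _ = 2 / (4 * u + 3) := by simp only [f, Nat.cast_zero]; field_simp; ring

noncomputable def Φ (u : ℝ) : ℝ :=
  -log u + (2 * u - 1) * (log (2 * u) - log (2 * u + 1)) +
    2 * (log (Gamma (u + 1 / 2)) - log (Gamma u))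

noncomputable def ΦApprox (n : ℕ) (u : ℝ) : ℝ :=
  -log u + (2 * u - 1) * (log (2 * u) - log (2 * u + 1)) +
    2 * ∑ k ∈ range (n + 1), (log (u + k) - log (u + k + 1 / 2))

noncomputable def correction (u : ℝ) : ℝ := log (4 * u + 1) - log (4 * u + 3)

theorem correction_strictMonoOn : StrictMonoOn correction (Set.Ioi 0) := by
  intro s (hs : 0 < s) t (ht : 0 < t) hst
  rw [correction, correction, ← log_div (by positivity) (by positivity),
    ← log_div (by positivity) (by positivity)]
  apply log_lt_log (by positivity)
  rw [div_lt_div_iff₀ (by positivity) (by positivity)]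
  nlinarith

theorem hasDerivAt_ΦApprox_add_correction (n : ℕ) {u : ℝ} (hu : 0 < u) :
    HasDerivAt (fun x => ΦApprox n x + correction x)
      (-(1 / u) + (2 * (log (2 * u) - log (2 * u + 1)) +
          (2 * u - 1) * (2 / (2 * u) - 2 / (2 * u + 1)))
        + 2 * ∑ k ∈ range (n + 1), (1 / (u + k) - 1 / (u + k + 1 / 2))
        + (4 / (4 * u + 1) - 4 / (4 * u + 3))) u := by
  have hlog : ∀ {a b : ℝ}, 0 < a * u + b →
      HasDerivAt (fun x => log (a * x + b)) (a / (a * u + b)) u :=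
    fun h => by simpa using (((hasDerivAt_id u).const_mul _).add_const _).log h.ne'
  have hsum : HasDerivAt (fun x => ∑ k ∈ range (n + 1), (log (x + k) - log (x + k + 1 / 2)))
      (∑ k ∈ range (n + 1), (1 / (u + k) - 1 / (u + k + 1 / 2))) u := by
    refine HasDerivAt.fun_sum fun k _ => ?_
    have hk : (0 : ℝ) ≤ k := k.cast_nonneg
    convert (hlog (a := 1) (b := k) (by linarith)).fun_sub
      (hlog (a := 1) (b := k + 1 / 2) (by linarith)) using 1 <;> simp only [one_mul, add_assoc]
  have hlin : HasDerivAt (fun x : ℝ => 2 * x - 1) 2 u := by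
    simpa using ((hasDerivAt_id u).const_mul 2).sub_const 1
  have hlogu : HasDerivAt (fun x => -log x) (-(1 / u)) u := by
    simpa [one_div] using (hasDerivAt_log hu.ne').fun_neg
  have h2 := hlog (a := 2) (b := 0) (by linarith)
  have h21 := hlog (a := 2) (b := 1) (by linarith)
  simp only [add_zero] at h2
  exact ((hlogu.add (hlin.mul (h2.sub h21))).add (hsum.const_mul 2)).add
    ((hlog (a := 4) (b := 1) (by linarith)).sub (hlog (a := 4) (b := 3) (by linarith)))

theorem ΦApprox_add_correction_antitoneOn (n : ℕ) :
    AntitoneOn (fun x => ΦApprox n x + correction x) (Set.Ioi 0) := by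
  refine antitoneOn_of_deriv_nonpos (convex_Ioi 0)
    (fun x hx => (hasDerivAt_ΦApprox_add_correction n hx).continuousAt.continuousWithinAt)
    (fun x hx => ?_) (fun u hu => ?_)
  · rw [interior_Ioi] at hx
    exact (hasDerivAt_ΦApprox_add_correction n hx).differentiableAt.differentiableWithinAt
  rw [interior_Ioi] at hu
  have hu : 0 < u := hu
  rw [(hasDerivAt_ΦApprox_add_correction n hu).deriv]
  have hcancel : -(1 / u) + (2 * u - 1) * (2 / (2 * u) - 2 / (2 * u + 1)) +
      2 * (1 / u - 1 / (u + 1 / 2)) = 0 := by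
    field_simp
    ring
  have hshift : ∑ k ∈ range (n + 1), (1 / (u + k) - 1 / (u + k + 1 / 2)) =
      ∑ k ∈ range n, (1 / (u + k + 1) - 1 / (u + k + 3 / 2)) + (1 / u - 1 / (u + 1 / 2)) := by
    rw [sum_range_succ']
    push_cast
    simp only [add_zero, add_assoc]
    norm_num
  have hlogb := log_two_mul_sub_log_le hu
  have htail := sum_range_inv_sub_inv_le (by linarith : -3 / 4 < u) n
  rw [hshift]
  have e1 : 4 / (4 * u + 1) = 2 * (2 / (4 * u + 1)) := by ring
  have e3 : 4 / (4 * u + 3) = 2 * (2 / (4 * u + 3)) := by ring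
  linarith

theorem log_GammaSeq {x : ℝ} (hx : 0 < x) {n : ℕ} (hn : n ≠ 0) :
    log (GammaSeq x n) = x * log n + log n.factorial - ∑ k ∈ range (n + 1), log (x + k) := by
  have hprod : ∀ k ∈ range (n + 1), x + k ≠ 0 := fun k _ => by positivity
  rw [GammaSeq, log_div (by positivity) (prod_ne_zero_iff.mpr hprod),
    log_mul (by positivity) (by positivity), log_rpow (by positivity), log_prod hprod]

theorem tendsto_ΦApprox_add_log {u : ℝ} (hu : 0 < u) :
    Tendsto (fun n : ℕ => ΦApprox n u + log n) atTop (𝓝 (Φ u)) := by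
  have hΓ {x : ℝ} (hx : 0 < x) :
      Tendsto (fun n => log (GammaSeq x n)) atTop (𝓝 (log (Gamma x))) :=
    ((continuousAt_log (Gamma_pos_of_pos hx).ne').tendsto).comp (GammaSeq_tendsto_Gamma x)
  refine (((hΓ (by linarith : 0 < u + 1 / 2)).sub (hΓ hu)).const_mul 2).const_add
    (-log u + (2 * u - 1) * (log (2 * u) - log (2 * u + 1))) |>.congr' ?_
  filter_upwards [eventually_ne_atTop 0] with n hn
  rw [log_GammaSeq (by linarith) hn, log_GammaSeq hu hn, ΦApprox]
  simp only [sum_sub_distrib, add_right_comm u (1 / 2)]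
  ring

theorem Φ_add_correction_antitoneOn : AntitoneOn (fun x => Φ x + correction x) (Set.Ioi 0) :=
  fun s (hs : 0 < s) t (ht : 0 < t) hst =>
    le_of_tendsto_of_tendsto ((tendsto_ΦApprox_add_log ht).add_const _)
      ((tendsto_ΦApprox_add_log hs).add_const _) <| Eventually.of_forall fun n => by
        linarith [ΦApprox_add_correction_antitoneOn n hs ht hst]

theorem Φ_strictAntiOn : StrictAntiOn Φ (Set.Ioi 0) := fun s hs t ht hst => by
  linarith [Φ_add_correction_antitoneOn hs ht hst.le, correction_strictMonoOn hs ht hst]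

theorem exp_mul_Φ_sub_Φ {a s : ℝ} (ha : 0 < a) (hs : 0 < s) (c : ℝ) :
    exp (c * (Φ s - Φ a)) =
      (a / s) ^ c * ((2 * a + 1) / (2 * a)) ^ (c * (2 * a - 1)) *
        (2 * s / (2 * s + 1)) ^ (c * (2 * s - 1)) *
        (Gamma a * Gamma (s + 1 / 2) / (Gamma (a + 1 / 2) * Gamma s)) ^ (c * 2) := by
  have hΓa := Gamma_pos_of_pos ha
  have hΓa' := Gamma_pos_of_pos (by linarith : 0 < a + 1 / 2)
  have hΓs := Gamma_pos_of_pos hs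
  have hΓs' := Gamma_pos_of_pos (by linarith : 0 < s + 1 / 2)
  rw [rpow_def_of_pos (by positivity), rpow_def_of_pos (by positivity),
    rpow_def_of_pos (by positivity), rpow_def_of_pos (by positivity), ← exp_add, ← exp_add,
    ← exp_add, log_div ha.ne' hs.ne', log_div (by positivity) (by positivity),
    log_div (by positivity) (by positivity), log_div (by positivity) (by positivity),
    log_mul hΓa.ne' hΓs'.ne', log_mul hΓa'.ne' hΓs.ne', Φ, Φ]
  ring_nf

end Nfun

theorem Nfun_eq_exp {p θ : ℝ} (hp : 2 < p) (hθ : 0 < θ) (hs : 0 < 2 - p * (1 - θ)) :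
    Nfun θ p = exp ((p - 2) / (2 * p * θ) *
      (Nfun.Φ ((2 - p * (1 - θ)) / (p - 2)) - Nfun.Φ (2 / (p - 2)))) := by
  have hp2 : p - 2 ≠ 0 := by linarith
  rw [Nfun.exp_mul_Φ_sub_Φ (div_pos two_pos (by linarith)) (div_pos hs (by linarith)), Nfun]
  congr 3
  · congr 1
    field_simp
  · congr 1
    · field_simp
      ring
    · field_simp
      ring
  · field_simp
    ring
  · field_simp
    ring
  · field_simp

theorem Nfun_gt_one_general (p θ : ℝ) (hp1 : 2 < p)
    (hθ1 : (p - 2) / p < θ) (hθ2 : θ < 1) : 1 < Nfun θ p := by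
  have hp : 0 < p := by linarith
  have hθp : p - 2 < p * θ := by rwa [div_lt_iff₀ hp, mul_comm] at hθ1
  have hθ : 0 < θ := pos_of_mul_pos_right (by linarith : 0 < p * θ) hp.le
  have hs : 0 < 2 - p * (1 - θ) := by linarith
  have hsa : (2 - p * (1 - θ)) / (p - 2) < 2 / (p - 2) :=
    div_lt_div_of_pos_right (by nlinarith) (by linarith)
  rw [Nfun_eq_exp hp1 hθ hs, one_lt_exp_iff]
  have hΦ := Nfun.Φ_strictAntiOn
    (show 0 < (2 - p * (1 - θ)) / (p - 2) from div_pos hs (by linarith))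
    (show (0 : ℝ) < 2 / (p - 2) from div_pos two_pos (by linarith)) hsa
  exact mul_pos (by positivity) (sub_pos.mpr hΦ)

theorem Nfun_gt_one (p θ : ℝ) (hp1 : 2 < p) (hp2 : p < 6)
    (hθ1 : (p - 2) / p < θ) (hθ2 : θ < 1) : 1 < Nfun θ p :=
  Nfun_gt_one_general p θ hp1 hθ1 hθ2
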